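/- arXiv:2505.05968 — 2 statements merged into one kernel-verified Lean document; each statement's English description precedes it below -/
import Mathlib

section
/- Let μ be the symmetric two-component mixture on ℝ² given by μ = (1/2) N((c,c), σ² I₂) + (1/2) N((−c,−c), σ² I₂) with c ≠ 0, σ > 0. Then each one-dimensional marginal of μ is the mixture (1/2) N(c, σ²) + (1/2) N(−c, σ²), and the product of the two marginals assigns to the set {(a₁,a₂) : a₁ a₂ < 0} probability 1/2, whereas μ assigns this set probability strictly less than 1/2. -/
open MeasureTheory ProbabilityTheory Set
open scoped NNReal ENNReal

/-!
Put p = N(c, σ²)(Iio 0) and q = N(c, σ²)(Ioi 0). Reflection x ↦ -x swaps these two masses for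
N(-c, σ²), and there is no atom at 0, so p + q = 1 and the marginal gives each half-line mass 1/2;
the product of marginals therefore charges {a₁a₂ < 0} with 2 · (1/2)(1/2) = 1/2. Under μ the
same set has mass 2pq = (1 - (p - q)²)/2, and p ≠ q: after reflecting and shifting by 2c,
p = N(c, σ²)(Ioi 2c), which misses the positive mass of (0, 2c] ⊆ Ioi 0 (for c > 0).
-/
lemma gaussianReal_neg_apply_Ioi_zero (m : ℝ) (v : ℝ≥0) :
    gaussianReal (-m) v (Ioi 0) = gaussianReal m v (Iio 0) := by
  rw [← gaussianReal_map_neg, Measure.map_apply measurable_neg measurableSet_Ioi]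
  simp

lemma gaussianReal_neg_apply_Iio_zero (m : ℝ) (v : ℝ≥0) :
    gaussianReal (-m) v (Iio 0) = gaussianReal m v (Ioi 0) := by
  rw [← gaussianReal_map_neg, Measure.map_apply measurable_neg measurableSet_Iio]
  simp

lemma measure_Iio_add_measure_Ioi {ν : Measure ℝ} [IsProbabilityMeasure ν] [NullSingletonClass ν]
    (a : ℝ) : ν (Iio a) + ν (Ioi a) = 1 := by
  rw [← measure_union (Ioi_disjoint_Iio_same.symm) measurableSet_Ioi, Iio_union_Ioi,
    measure_compl (measurableSet_singleton a) (measure_ne_top _ _), measure_singleton,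
    measure_univ, tsub_zero]

lemma gaussianReal_Iio_zero_lt_Ioi_zero {c : ℝ} (hc : 0 < c) {v : ℝ≥0} (hv : v ≠ 0) :
    gaussianReal c v (Iio 0) < gaussianReal c v (Ioi 0) := by
  have hshift : gaussianReal (-c) v (Ioi 0) = gaussianReal c v (Ioi (2 * c)) := by
    have hmap : (gaussianReal (-c) v).map (· + 2 * c) = gaussianReal c v := by
      rw [gaussianReal_map_add_const]; ring_nf
    rw [← hmap, Measure.map_apply (by fun_prop) measurableSet_Ioi]
    simp
  have hgap : 0 < gaussianReal c v (Ioc 0 (2 * c)) := by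
    refine pos_iff_ne_zero.2 fun h0 => ?_
    have := gaussianReal_absolutelyContinuous' c hv h0
    simp [Real.volume_Ioc] at this
    linarith
  rw [← gaussianReal_neg_apply_Ioi_zero, hshift,
    ← Ioc_union_Ioi_eq_Ioi (by positivity : (0 : ℝ) ≤ 2 * c), measure_union Ioc_disjoint_Ioi_same measurableSet_Ioi, add_comm]
  exact ENNReal.lt_add_right (measure_ne_top _ _) hgap.ne'

lemma gaussianReal_Iio_zero_ne_Ioi_zero {c : ℝ} (hc : c ≠ 0) {v : ℝ≥0} (hv : v ≠ 0) :
    gaussianReal c v (Iio 0) ≠ gaussianReal c v (Ioi 0) := by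
  rcases hc.lt_or_gt with hneg | hpos
  · have := gaussianReal_Iio_zero_lt_Ioi_zero (neg_pos.2 hneg) hv
    rw [gaussianReal_neg_apply_Iio_zero, gaussianReal_neg_apply_Ioi_zero] at this
    exact this.ne'
  · exact (gaussianReal_Iio_zero_lt_Ioi_zero hpos hv).ne

lemma half_gaussianReal_add_half_neg_apply_Ioi_zero (m : ℝ) {v : ℝ≥0} (hv : v ≠ 0) :
    ((1/2 : ℝ≥0∞) • gaussianReal m v + (1/2 : ℝ≥0∞) • gaussianReal (-m) v) (Ioi 0) = 1 / 2 := by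
  have := nullSingletonClass_gaussianReal (μ := m) hv
  rw [Measure.add_apply, Measure.smul_apply, Measure.smul_apply, gaussianReal_neg_apply_Ioi_zero,
    smul_eq_mul, smul_eq_mul, ← mul_add, add_comm, measure_Iio_add_measure_Ioi, mul_one]

lemma half_gaussianReal_add_half_neg_apply_Iio_zero (m : ℝ) {v : ℝ≥0} (hv : v ≠ 0) :
    ((1/2 : ℝ≥0∞) • gaussianReal m v + (1/2 : ℝ≥0∞) • gaussianReal (-m) v) (Iio 0) = 1 / 2 := by
  have := nullSingletonClass_gaussianReal (μ := m) hv
  rw [Measure.add_apply, Measure.smul_apply, Measure.smul_apply, gaussianReal_neg_apply_Iio_zero,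
    smul_eq_mul, smul_eq_mul, ← mul_add, measure_Iio_add_measure_Ioi, mul_one]

lemma measure_prod_mul_neg (ν₁ ν₂ : Measure ℝ) [SFinite ν₂] :
    (ν₁.prod ν₂) {p : ℝ × ℝ | p.1 * p.2 < 0}
      = ν₁ (Ioi 0) * ν₂ (Iio 0) + ν₁ (Iio 0) * ν₂ (Ioi 0) := by
  have hS : {p : ℝ × ℝ | p.1 * p.2 < 0} = Ioi 0 ×ˢ Iio 0 ∪ Iio 0 ×ˢ Ioi 0 := by
    ext ⟨x, y⟩
    simp [mul_neg_iff]
  rw [hS, measure_union _ (measurableSet_Iio.prod measurableSet_Ioi), Measure.prod_prod,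
    Measure.prod_prod]
  exact Ioi_disjoint_Iio_same.set_prod_left _ _

lemma ENNReal.mul_add_mul_lt_half {p q : ℝ≥0∞} (hpq : p + q = 1) (hne : p ≠ q) :
    p * q + q * p < 1 / 2 := by
  lift p to ℝ≥0 using ne_top_of_le_ne_top ENNReal.one_ne_top (hpq ▸ le_self_add)
  lift q to ℝ≥0 using ne_top_of_le_ne_top ENNReal.one_ne_top (hpq ▸ le_add_self)
  have hpq' : (p : ℝ) + q = 1 := by exact_mod_cast hpq
  have hne' : (p : ℝ) ≠ q := by exact_mod_cast hne
  have key : (p : ℝ) * q + q * p < 1 / 2 := by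
    nlinarith [sq_pos_of_ne_zero (sub_ne_zero.2 hne')]
  rw [show (1 / 2 : ℝ≥0∞) = ((1 / 2 : ℝ≥0) : ℝ≥0∞) by simp]
  exact_mod_cast key

theorem stmt_15 (c σ : ℝ) (hc : c ≠ 0) (hσ : 0 < σ)
    (v : ℝ≥0) (hv : (v : ℝ) = σ ^ 2)
    (μ : Measure (ℝ × ℝ))
    (hμ : μ = (1/2 : ℝ≥0∞) • ((gaussianReal c v).prod (gaussianReal c v))
        + (1/2 : ℝ≥0∞) • ((gaussianReal (-c) v).prod (gaussianReal (-c) v)))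
    (marg : Measure ℝ)
    (hmarg : marg = (1/2 : ℝ≥0∞) • gaussianReal c v + (1/2 : ℝ≥0∞) • gaussianReal (-c) v) :
    μ.map Prod.fst = marg ∧ μ.map Prod.snd = marg ∧
      (marg.prod marg) {p : ℝ × ℝ | p.1 * p.2 < 0} = 1/2 ∧
      μ {p : ℝ × ℝ | p.1 * p.2 < 0} < 1/2 := by
  have hv0 : v ≠ 0 := by
    rintro rfl
    simp only [NNReal.coe_zero] at hv
    nlinarith
  have := nullSingletonClass_gaussianReal (μ := c) hv0
  set p := gaussianReal c v (Iio 0)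
  set q := gaussianReal c v (Ioi 0)
  refine ⟨?_, ?_, ?_, ?_⟩
  · simp [hμ, hmarg, Measure.map_add _ _ measurable_fst]
  · simp [hμ, hmarg, Measure.map_add _ _ measurable_snd]
  · rw [hmarg, measure_prod_mul_neg, half_gaussianReal_add_half_neg_apply_Ioi_zero c hv0,
      half_gaussianReal_add_half_neg_apply_Iio_zero c hv0, ← two_mul, ← mul_assoc,
      ENNReal.mul_div_cancel two_ne_zero ENNReal.ofNat_ne_top, one_mul]
  · rw [hμ, Measure.add_apply, Measure.smul_apply, Measure.smul_apply, measure_prod_mul_neg,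
      measure_prod_mul_neg, gaussianReal_neg_apply_Ioi_zero, gaussianReal_neg_apply_Iio_zero,
      smul_eq_mul, smul_eq_mul, add_comm (q * p), ← add_mul, ENNReal.add_halves, one_mul]
    exact ENNReal.mul_add_mul_lt_half (measure_Iio_add_measure_Ioi 0)
      (gaussianReal_Iio_zero_ne_Ioi_zero hc hv0)
end

section
/- Let n ≥ 1 and 0 < p < 1 with p ≠ 1/2. Let π* be the distribution on {0,1}^n assigning mass p to (1,...,1) and 1−p to (0,...,0), and let π̂ be the product of its marginals, i.e., the product measure whose each factor assigns p to 1 and 1−p to 0. Then δ_TV(π*, π̂) = (1/2)[ |p − p^n| + |(1−p) − (1−p)^n| + Σ over the remaining 2^n − 2 points of p^{k}(1−p)^{n−k} ] and in particular δ_TV(π*, π̂) ≥ 1 − p^n − (1−p)^n − max(p, 1−p); moreover δ_TV(π*, π̂) → 1 as n → ∞ when p is fixed in (0,1). -/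
/-!
Off the two modes `π*` vanishes, so those points contribute their full product mass to the total
variation, while at the modes the product measure is dominated (`p ^ n ≤ p`, `(1 - p) ^ n ≤ 1 - p`).
Since the product weights sum to one, both halves equal `1 - p ^ n - (1 - p) ^ n`, which tends to
`1` because both modes get exponentially small product mass.
-/

noncomputable def tvP (p : ℝ) (n : ℕ) : ℝ :=
  (1/2) * ∑ a : Fin n → Bool,
    |(if a = (fun _ => true) then p else if a = (fun _ => false) then 1 - p else 0)
      - ∏ i, (if a i then p else 1 - p)|

open Finset

theorem Finset.sum_univ_eq_add_add_sum_filter_ne {α M : Type*} [Fintype α] [DecidableEq α]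
    [AddCommMonoid M] {x y : α} (hxy : x ≠ y) (f : α → M) :
    ∑ a, f a = f x + f y + ∑ a ∈ univ.filter (fun a => a ≠ x ∧ a ≠ y), f a := by
  have hfilter : univ.filter (fun a => a ≠ x ∧ a ≠ y) = (univ.erase x).erase y := by
    ext a; simp [and_comm]
  rw [hfilter, add_assoc, add_sum_erase _ _ (mem_erase.2 ⟨hxy.symm, mem_univ y⟩),
    add_sum_erase _ _ (mem_univ x)]

theorem const_true_ne_const_false (ι : Type*) [Nonempty ι] :
    (fun _ => true : ι → Bool) ≠ fun _ => false :=
  fun h => by simpa using congrFun h (Classical.arbitrary ι)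

theorem sum_prod_bernoulli_eq_one {ι : Type*} [Fintype ι] [DecidableEq ι] (p : ℝ) :
    ∑ a : ι → Bool, ∏ i, (if a i then p else 1 - p) = 1 := by
  rw [← Fintype.prod_sum (fun (_ : ι) (b : Bool) => if b then p else 1 - p)]
  simp

section

variable {n : ℕ} (p : ℝ)

theorem sum_prod_bernoulli_off_modes (hn : 1 ≤ n) :
    ∑ a ∈ univ.filter (fun a : Fin n → Bool => a ≠ (fun _ => true) ∧ a ≠ (fun _ => false)),
      ∏ i, (if a i then p else 1 - p) = 1 - p ^ n - (1 - p) ^ n := by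
  have : Nonempty (Fin n) := ⟨⟨0, hn⟩⟩
  have htotal := sum_prod_bernoulli_eq_one (ι := Fin n) p
  rw [sum_univ_eq_add_add_sum_filter_ne (const_true_ne_const_false _)] at htotal
  simp only [if_true, Bool.false_eq_true, if_false, prod_const, card_univ, Fintype.card_fin]
    at htotal
  linarith

variable {p}

theorem tvP_eq_half_mul (hp0 : 0 ≤ p) (hp1 : p ≤ 1) (hn : 1 ≤ n) :
    tvP p n = (1/2) * (|p - p ^ n| + |(1 - p) - (1 - p) ^ n| +
      ∑ a ∈ univ.filter (fun a : Fin n → Bool => a ≠ (fun _ => true) ∧ a ≠ (fun _ => false)),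
        ∏ i, (if a i then p else 1 - p)) := by
  have : Nonempty (Fin n) := ⟨⟨0, hn⟩⟩
  have hTF := const_true_ne_const_false (Fin n)
  rw [tvP, sum_univ_eq_add_add_sum_filter_ne hTF]
  congr 2
  · simp [if_neg hTF.symm]
  · refine sum_congr rfl fun a ha => ?_
    obtain ⟨hT, hF⟩ := (mem_filter.1 ha).2
    rw [if_neg hT, if_neg hF, zero_sub, abs_neg,
      abs_of_nonneg (prod_nonneg fun i _ => by split <;> linarith)]

theorem tvP_eq (hp0 : 0 ≤ p) (hp1 : p ≤ 1) (hn : 1 ≤ n) :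
    tvP p n = 1 - p ^ n - (1 - p) ^ n := by
  have hpn : p ^ n ≤ p := pow_le_of_le_one hp0 hp1 (by omega)
  have hqn : (1 - p) ^ n ≤ 1 - p := pow_le_of_le_one (by linarith) (by linarith) (by omega)
  rw [tvP_eq_half_mul hp0 hp1 hn, sum_prod_bernoulli_off_modes p hn,
    abs_of_nonneg (by linarith), abs_of_nonneg (by linarith)]
  ring

theorem tendsto_tvP (hp0 : 0 < p) (hp1 : p < 1) :
    Filter.Tendsto (tvP p) Filter.atTop (nhds 1) := by
  have hp := tendsto_pow_atTop_nhds_zero_of_lt_one hp0.le hp1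
  have hq := tendsto_pow_atTop_nhds_zero_of_lt_one (sub_nonneg.2 hp1.le) (sub_lt_self 1 hp0)
  have hlim := (tendsto_const_nhds (x := (1 : ℝ))).sub hp |>.sub hq
  rw [sub_zero, sub_zero] at hlim
  refine hlim.congr' ?_
  filter_upwards [Filter.eventually_ge_atTop 1] with n hn
  exact (tvP_eq hp0.le hp1.le hn).symm

end

open scoped Classical in
theorem stmt_17_general (p : ℝ) (hp0 : 0 < p) (hp1 : p < 1) :
    (∀ n : ℕ, 1 ≤ n →
      tvP p n = (1/2) * (|p - p ^ n| + |(1 - p) - (1 - p) ^ n| +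
        ∑ a ∈ Finset.univ.filter
            (fun a : Fin n → Bool => a ≠ (fun _ => true) ∧ a ≠ (fun _ => false)),
          ∏ i, (if a i then p else 1 - p))) ∧
    (∀ n : ℕ, 1 ≤ n → tvP p n ≥ 1 - p ^ n - (1 - p) ^ n - max p (1 - p)) ∧
    Filter.Tendsto (tvP p) Filter.atTop (nhds 1) := by
  refine ⟨fun n hn => tvP_eq_half_mul hp0.le hp1.le hn, fun n hn => ?_, tendsto_tvP hp0 hp1⟩
  rw [tvP_eq hp0.le hp1.le hn]
  linarith [le_max_left p (1 - p)]

open scoped Classical in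
theorem stmt_17 (p : ℝ) (hp0 : 0 < p) (hp1 : p < 1) (hp : p ≠ 1/2) :
    (∀ n : ℕ, 1 ≤ n →
      tvP p n = (1/2) * (|p - p ^ n| + |(1 - p) - (1 - p) ^ n| +
        ∑ a ∈ Finset.univ.filter
            (fun a : Fin n → Bool => a ≠ (fun _ => true) ∧ a ≠ (fun _ => false)),
          ∏ i, (if a i then p else 1 - p))) ∧
    (∀ n : ℕ, 1 ≤ n → tvP p n ≥ 1 - p ^ n - (1 - p) ^ n - max p (1 - p)) ∧
    Filter.Tendsto (tvP p) Filter.atTop (nhds 1) :=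
  stmt_17_general p hp0 hp1
end
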